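/- arXiv:math/0610710 — 4 statements merged into one kernel-verified Lean document; each statement's English description precedes it below -/
import Mathlib

section
/- The open unit ball B = {(z_1,z_2) ∈ ℂ² : |z_1|² + |z_2|² < 1} and the open unit bidisc D² = {(z_1,z_2) ∈ ℂ² : |z_1| < 1 and |z_2| < 1} are not biholomorphic: there is no holomorphic bijection F : B → D² whose inverse is holomorphic. -/
/-!
Compose a biholomorphism `B → D²` with a product of Möbius maps so that its inverse `g` fixes
the origin. By the Schwarz lemma, applied to `g` and to its inverse on unit balls, `Dg(0)` maps
the sup norm of `ℂ²` isometrically onto the Euclidean norm. This is impossible, since the sup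
norm does not satisfy the parallelogram law.
-/

open Set Metric

/-- The unit ball `B = {(z₁,z₂) ∈ ℂ² : |z₁|² + |z₂|² < 1}`. -/
def unitBall2 : Set (ℂ × ℂ) := {z | ‖z.1‖ ^ 2 + ‖z.2‖ ^ 2 < 1}

/-- The unit bidisc `D² = {(z₁,z₂) ∈ ℂ² : |z₁| < 1 and |z₂| < 1}`. -/
def bidisc : Set (ℂ × ℂ) := {z | ‖z.1‖ < 1 ∧ ‖z.2‖ < 1}

open ComplexConjugate

theorem fderiv_apply_fderiv_of_eventually_rightInverse {𝕜 E F : Type*}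
    [NontriviallyNormedField 𝕜] [NormedAddCommGroup E] [NormedSpace 𝕜 E]
    [NormedAddCommGroup F] [NormedSpace 𝕜 F] {f : E → F} {g : F → E} {y : F}
    (hf : DifferentiableAt 𝕜 f (g y)) (hg : DifferentiableAt 𝕜 g y)
    (hfg : ∀ᶠ w in nhds y, f (g w) = w) (v : F) :
    fderiv 𝕜 f (g y) (fderiv 𝕜 g y v) = v := by
  have hid : fderiv 𝕜 (f ∘ g) y = ContinuousLinearMap.id 𝕜 F := by
    rw [(show f ∘ g =ᶠ[nhds y] id from hfg).fderiv_eq, fderiv_id]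
  simpa [fderiv_comp y hf hg] using congrArg (· v) hid

theorem norm_fderiv_apply_of_rightInvOn_ball {E F : Type*} [NormedAddCommGroup E]
    [NormedSpace ℂ E] [NormedAddCommGroup F] [NormedSpace ℂ F] {f : E → F} {g : F → E} {r : ℝ}
    (hr : 0 < r) (hf : DifferentiableOn ℂ f (ball 0 r)) (hg : DifferentiableOn ℂ g (ball 0 r))
    (hfm : MapsTo f (ball 0 r) (ball 0 r)) (hgm : MapsTo g (ball 0 r) (ball 0 r))
    (hg0 : g 0 = 0) (hfg : RightInvOn g f (ball 0 r)) (w : F) :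
    ‖fderiv ℂ g 0 w‖ = ‖w‖ := by
  have hf0 : f 0 = 0 := by simpa [hg0] using hfg (mem_ball_self hr)
  have hDf : ‖fderiv ℂ f 0‖ ≤ 1 := Complex.norm_fderiv_le_one_of_mapsTo_ball hf
    (hf0 ▸ hfm.mono_right ball_subset_closedBall) hr
  have hDg : ‖fderiv ℂ g 0‖ ≤ 1 := Complex.norm_fderiv_le_one_of_mapsTo_ball hg
    (hg0 ▸ hgm.mono_right ball_subset_closedBall) hr
  have hchain : fderiv ℂ f 0 (fderiv ℂ g 0 w) = w := by
    have := fderiv_apply_fderiv_of_eventually_rightInverse (y := 0)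
      (hg0 ▸ hf.differentiableAt (ball_mem_nhds 0 hr))
      (hg.differentiableAt (ball_mem_nhds 0 hr))
      (Filter.eventually_of_mem (ball_mem_nhds 0 hr) hfg) w
    rwa [hg0] at this
  refine le_antisymm (by simpa using (fderiv ℂ g 0).le_of_opNorm_le hDg w) ?_
  calc ‖w‖ = ‖fderiv ℂ f 0 (fderiv ℂ g 0 w)‖ := by rw [hchain]
    _ ≤ ‖fderiv ℂ g 0 w‖ := by simpa using (fderiv ℂ f 0).le_of_opNorm_le hDf _

theorem LinearMap.not_forall_norm_apply_prod_eq {𝕜 E : Type*} [RCLike 𝕜]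
    [NormedAddCommGroup E] [InnerProductSpace 𝕜 E] (T : 𝕜 × 𝕜 →ₗ[𝕜] E) :
    ¬ ∀ w, ‖T w‖ = ‖w‖ := by
  intro hT
  have h := parallelogram_law_with_norm 𝕜 (T (1, 0)) (T (0, 1))
  rw [← map_add, ← map_sub, hT, hT, hT, hT] at h
  norm_num [Prod.norm_def] at h

noncomputable def mobius (a z : ℂ) : ℂ := (z - a) / (1 - conj a * z)

theorem one_sub_conj_mul_ne_zero {a z : ℂ} (ha : ‖a‖ < 1) (hz : ‖z‖ < 1) :
    1 - conj a * z ≠ 0 := by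
  refine sub_ne_zero.2 (fun h => ?_)
  have : ‖conj a * z‖ < 1 := by
    rw [norm_mul, Complex.norm_conj]
    nlinarith [norm_nonneg a, norm_nonneg z]
  simp [← h] at this

theorem normSq_one_sub_conj_mul_sub_normSq_sub (a z : ℂ) :
    Complex.normSq (1 - conj a * z) - Complex.normSq (z - a)
      = (1 - Complex.normSq a) * (1 - Complex.normSq z) := by
  simp only [Complex.normSq_apply, Complex.sub_re, Complex.sub_im, Complex.mul_re,
    Complex.mul_im, Complex.one_re, Complex.one_im, Complex.conj_re, Complex.conj_im]
  ring

theorem norm_mobius_lt_one {a z : ℂ} (ha : ‖a‖ < 1) (hz : ‖z‖ < 1) : ‖mobius a z‖ < 1 := by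
  have hd := one_sub_conj_mul_ne_zero ha hz
  rw [mobius, norm_div, div_lt_one (norm_pos_iff.2 hd), ← sq_lt_sq₀ (norm_nonneg _)
    (norm_nonneg _), Complex.sq_norm, Complex.sq_norm]
  have ha' : Complex.normSq a < 1 := by rwa [← Complex.sq_norm, sq_lt_one_iff₀ (norm_nonneg a)]
  have hz' : Complex.normSq z < 1 := by rwa [← Complex.sq_norm, sq_lt_one_iff₀ (norm_nonneg z)]
  nlinarith [normSq_one_sub_conj_mul_sub_normSq_sub a z, mul_pos (sub_pos.2 ha') (sub_pos.2 hz')]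

theorem mobius_mobius_neg {a z : ℂ} (ha : ‖a‖ < 1) (hz : ‖z‖ < 1) :
    mobius a (mobius (-a) z) = z := by
  have hd : 1 + conj a * z ≠ 0 := by
    simpa using one_sub_conj_mul_ne_zero (a := -a) (by rwa [norm_neg]) hz
  have haa : 1 - conj a * a ≠ 0 := one_sub_conj_mul_ne_zero ha ha
  have hnum : mobius (-a) z - a = z * (1 - conj a * a) / (1 + conj a * z) := by
    simp only [mobius, map_neg, neg_mul, sub_neg_eq_add]
    rw [eq_div_iff hd, sub_mul, div_mul_cancel₀ _ hd]
    ring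
  have hden : 1 - conj a * mobius (-a) z = (1 - conj a * a) / (1 + conj a * z) := by
    simp only [mobius, map_neg, neg_mul, sub_neg_eq_add]
    rw [eq_div_iff hd, sub_mul, mul_assoc, div_mul_cancel₀ _ hd]
    ring
  rw [mobius, hnum, hden, div_div_div_cancel_right₀ hd, mul_div_cancel_right₀ _ haa]

theorem mobius_neg_zero (a : ℂ) : mobius (-a) 0 = a := by simp [mobius]

theorem differentiableAt_mobius {a z : ℂ} (ha : ‖a‖ < 1) (hz : ‖z‖ < 1) :
    DifferentiableAt ℂ (mobius a) z :=
  DifferentiableAt.div (c := fun z => z - a) (d := fun z => 1 - conj a * z) (by fun_prop)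
    (by fun_prop) (one_sub_conj_mul_ne_zero ha hz)

noncomputable def bidiscMobius (a : ℂ × ℂ) : ℂ × ℂ → ℂ × ℂ :=
  Prod.map (mobius a.1) (mobius a.2)

theorem neg_mem_bidisc {a : ℂ × ℂ} (ha : a ∈ bidisc) : -a ∈ bidisc := by
  simpa [bidisc] using ha

theorem mapsTo_bidiscMobius {a : ℂ × ℂ} (ha : a ∈ bidisc) :
    MapsTo (bidiscMobius a) bidisc bidisc := fun _ hw =>
  ⟨norm_mobius_lt_one ha.1 hw.1, norm_mobius_lt_one ha.2 hw.2⟩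

theorem differentiableOn_bidiscMobius {a : ℂ × ℂ} (ha : a ∈ bidisc) :
    DifferentiableOn ℂ (bidiscMobius a) bidisc := fun w hw =>
  (DifferentiableAt.prodMap w (differentiableAt_mobius ha.1 hw.1)
    (differentiableAt_mobius ha.2 hw.2)).differentiableWithinAt

theorem bidiscMobius_bidiscMobius_neg {a w : ℂ × ℂ} (ha : a ∈ bidisc) (hw : w ∈ bidisc) :
    bidiscMobius a (bidiscMobius (-a) w) = w :=
  Prod.ext (mobius_mobius_neg ha.1 hw.1) (mobius_mobius_neg ha.2 hw.2)

theorem bidiscMobius_neg_zero (a : ℂ × ℂ) : bidiscMobius (-a) 0 = a :=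
  Prod.ext (mobius_neg_zero a.1) (mobius_neg_zero a.2)

theorem bidisc_eq_ball : bidisc = ball (0 : ℂ × ℂ) 1 := by
  ext z
  simp [bidisc, Prod.norm_def]

theorem unitBall2_eq_preimage :
    unitBall2 = (WithLp.prodContinuousLinearEquiv 2 ℂ ℂ ℂ).symm ⁻¹' ball 0 1 := by
  ext z
  rw [mem_preimage, mem_ball_zero_iff, ← sq_lt_one_iff₀ (norm_nonneg _),
    WithLp.prod_norm_sq_eq_of_L2]
  rfl

/-- Poincaré's theorem: the unit ball and the unit bidisc of `ℂ²` are not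
biholomorphic, i.e. there is no holomorphic bijection from the ball onto the
bidisc whose inverse is holomorphic. -/
theorem ball_not_biholomorphic_to_bidisc :
    ¬ ∃ (F G : ℂ × ℂ → ℂ × ℂ),
        DifferentiableOn ℂ F unitBall2 ∧ DifferentiableOn ℂ G bidisc ∧
        MapsTo F unitBall2 bidisc ∧ MapsTo G bidisc unitBall2 ∧
        (∀ z ∈ unitBall2, G (F z) = z) ∧ (∀ w ∈ bidisc, F (G w) = w) := by
  rintro ⟨F, G, hFd, hGd, hFm, hGm, hGF, hFG⟩
  let e := (WithLp.prodContinuousLinearEquiv 2 ℂ ℂ ℂ).symm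
  have he : MapsTo e unitBall2 (ball 0 1) := by
    rw [unitBall2_eq_preimage]; exact mapsTo_preimage _ _
  have he' : MapsTo e.symm (ball 0 1) unitBall2 := by
    rw [unitBall2_eq_preimage]; intro x hx; simpa [e] using hx
  have h0 : (0 : ℂ × ℂ) ∈ unitBall2 := by simp [unitBall2]
  set a := F 0
  have ha : a ∈ bidisc := hFm h0
  have ha' : -a ∈ bidisc := neg_mem_bidisc ha
  let f := bidiscMobius a ∘ F ∘ e.symm
  let g := e ∘ G ∘ bidiscMobius (-a)
  have hf : DifferentiableOn ℂ f (ball 0 1) := (differentiableOn_bidiscMobius ha).comp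
    (hFd.comp e.symm.differentiable.differentiableOn he') (hFm.comp he')
  have hg : DifferentiableOn ℂ g bidisc := e.differentiable.comp_differentiableOn
    (hGd.comp (differentiableOn_bidiscMobius ha') (mapsTo_bidiscMobius ha'))
  have hfm : MapsTo f (ball 0 1) bidisc := (mapsTo_bidiscMobius ha).comp (hFm.comp he')
  have hgm : MapsTo g bidisc (ball 0 1) := he.comp (hGm.comp (mapsTo_bidiscMobius ha'))
  have hg0 : g 0 = 0 := by simp [g, bidiscMobius_neg_zero, a, hGF 0 h0]
  have hfg : RightInvOn g f bidisc := fun w hw => by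
    simp [f, g, hFG _ (mapsTo_bidiscMobius ha' hw), bidiscMobius_bidiscMobius_neg ha hw]
  rw [bidisc_eq_ball] at hfm hg hgm hfg
  exact (fderiv ℂ g 0).toLinearMap.not_forall_norm_apply_prod_eq
    (norm_fderiv_apply_of_rightInvOn_ball one_pos hf hg hfm hgm hg0 hfg)
end

section
/- Let Ω ⊆ ℂ^{n+1} be a bounded domain such that Aut(Ω) is not compact in the compact-open topology. Then there exist a point p ∈ ∂Ω, a point q ∈ Ω, and a sequence φ_j ∈ Aut(Ω) such that φ_j(q) → p as j → ∞. -/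
open Set Filter Topology

variable {E : Type*} [NormedAddCommGroup E] [NormedSpace ℂ E]

/-- `φ` is a holomorphic automorphism of `Ω`: a holomorphic bijection of `Ω` onto
itself with holomorphic inverse. -/
def IsAut (Ω : Set E) (φ : E → E) : Prop :=
  DifferentiableOn ℂ φ Ω ∧ Set.BijOn φ Ω Ω ∧
    ∃ ψ : E → E, DifferentiableOn ℂ ψ Ω ∧ (∀ z ∈ Ω, ψ (φ z) = z) ∧ ∀ z ∈ Ω, φ (ψ z) = z

/-- The automorphism group `Aut(Ω)`, realized as a set of continuous maps `Ω → E`;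
the space `C(Ω, E)` carries the compact-open topology. -/
def AutSet (Ω : Set E) : Set C(Ω, E) :=
  { f | ∃ φ : E → E, IsAut Ω φ ∧ ∀ x : Ω, f x = φ x }

/-!
Suppose no orbit of `Aut(Ω)` accumulates at `∂Ω`; we show that `Aut(Ω)` is compact. By the
Schwarz lemma the automorphisms of a bounded domain are equicontinuous, so by Arzelà–Ascoli
`Aut(Ω)` is relatively compact in `C(Ω, E)`. If automorphisms `φ_j` converge to `g`, a
subsequence of their inverses converges to some `h`. Cauchy estimates make locally uniform limits
of holomorphic maps holomorphic, the orbit hypothesis makes `g` and `h` map `Ω` into `Ω`, and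
letting `j → ∞` in `ψ_j ∘ φ_j = id = φ_j ∘ ψ_j` shows that they are mutually inverse. Hence
`g ∈ Aut(Ω)`, so `Aut(Ω)` is closed, hence compact.
-/

open Metric

theorem ContinuousMap.isCompact_closure_of_equicontinuous {X α : Type*} [TopologicalSpace X]
    [CompactlyCoherentSpace X] [UniformSpace α] [T2Space α] {S : Set C(X, α)}
    (hS : Equicontinuous ((⇑) ∘ ((↑) : S → C(X, α))))
    (hS' : ∀ x, ∃ Q, IsCompact Q ∧ ∀ f ∈ S, f x ∈ Q) :
    IsCompact (closure S) := by
  have hemb : IsClosedEmbedding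
      (UniformOnFun.ofFun {K : Set X | IsCompact K} ∘ ((⇑) : C(X, α) → X → α)) := by
    refine ⟨isUniformEmbedding_toUniformOnFunIsCompact.isEmbedding, ?_⟩
    have hrange : range (UniformOnFun.ofFun {K : Set X | IsCompact K} ∘ ((⇑) : C(X, α) → X → α))
        = {f | Continuous (UniformOnFun.toFun _ f)} := range_toUniformOnFunIsCompact
    rw [hrange]
    exact UniformOnFun.isClosed_setOfPred_continuous CompactlyCoherentSpace.isCoherentWith
  exact ArzelaAscoli.isCompact_closure_of_isClosedEmbedding (fun _ hK => hK) hemb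
    (fun K _ => hS.equicontinuousOn K) (fun _ _ x _ => hS' x)

variable {F : Type*} [NormedAddCommGroup F] [NormedSpace ℂ F]

theorem Complex.equicontinuousOn_of_differentiableOn_of_mapsTo {ι : Type*} {f : ι → E → F}
    {Ω : Set E} {B : Set F} (hΩ : IsOpen Ω) (hB : Bornology.IsBounded B)
    (hf : ∀ i, DifferentiableOn ℂ (f i) Ω) (hfB : ∀ i, MapsTo (f i) Ω B) :
    EquicontinuousOn f Ω := by
  intro x hx
  obtain ⟨R, hR, hRΩ⟩ := isOpen_iff.1 hΩ x hx
  refine (equicontinuousAt_of_continuity_modulus (fun y => diam B / R * dist y x) ?_ f ?_)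
    |>.equicontinuousWithinAt Ω
  · have h : Tendsto (fun y => diam B / R * dist y x) (𝓝 x) (𝓝 (diam B / R * dist x x)) :=
      ((continuous_id.dist continuous_const).tendsto x).const_mul _
    simpa using h
  · filter_upwards [ball_mem_nhds x hR] with y hy i
    rw [dist_comm]
    refine Complex.dist_le_div_mul_dist_of_mapsTo_ball ((hf i).mono hRΩ) (fun z hz => ?_) hy
    exact mem_closedBall.2 (dist_le_diam_of_mem hB (hfB i (hRΩ hz)) (hfB i hx))

theorem Complex.norm_fderiv_sub_le_of_forall_dist_le {f g : E → F} {c : E} {r ε : ℝ}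
    (hr : 0 < r) (hf : DifferentiableOn ℂ f (ball c r)) (hg : DifferentiableOn ℂ g (ball c r))
    (hfg : ∀ z ∈ ball c r, dist (f z) (g z) ≤ ε) :
    ‖fderiv ℂ f c - fderiv ℂ g c‖ ≤ 2 * ε / r := by
  have hc : c ∈ ball c r := mem_ball_self hr
  have hmaps : MapsTo (fun z => f z - g z) (ball c r) (closedBall (f c - g c) (2 * ε)) := by
    intro z hz
    rw [mem_closedBall, dist_eq_norm]
    calc ‖f z - g z - (f c - g c)‖ ≤ ‖f z - g z‖ + ‖f c - g c‖ := norm_sub_le _ _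
      _ ≤ 2 * ε := by
        rw [← dist_eq_norm, ← dist_eq_norm]
        linarith [hfg z hz, hfg c hc]
  have hdiff : ∀ h : E → F, DifferentiableOn ℂ h (ball c r) → DifferentiableAt ℂ h c :=
    fun h hh => hh.differentiableAt (ball_mem_nhds c hr)
  rw [← fderiv_sub (hdiff f hf) (hdiff g hg)]
  exact Complex.norm_fderiv_le_div_of_mapsTo_ball (hf.sub hg) hmaps hr

theorem Complex.uniformCauchySeqOn_fderiv_ball {ι : Type*} [SemilatticeSup ι] [Nonempty ι]
    {φ : ι → E → F} {c : E} {r : ℝ} (hr : 0 < r)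
    (hφ : ∀ j, DifferentiableOn ℂ (φ j) (ball c (2 * r)))
    (hcauchy : UniformCauchySeqOn φ atTop (ball c (2 * r))) :
    UniformCauchySeqOn (fun j => fderiv ℂ (φ j)) atTop (ball c r) := by
  rw [Metric.uniformCauchySeqOn_iff] at hcauchy ⊢
  intro δ hδ
  obtain ⟨N, hN⟩ := hcauchy (δ * r / 4) (by positivity)
  refine ⟨N, fun m hm n hn w hw => ?_⟩
  have hsub : ball w r ⊆ ball c (2 * r) := ball_subset_ball' (by rw [mem_ball] at hw; linarith)
  rw [dist_eq_norm]
  calc ‖fderiv ℂ (φ m) w - fderiv ℂ (φ n) w‖ ≤ 2 * (δ * r / 4) / r :=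
        Complex.norm_fderiv_sub_le_of_forall_dist_le hr ((hφ m).mono hsub) ((hφ n).mono hsub)
          fun z hz => (hN m hm n hn z (hsub hz)).le
    _ < δ := by field_simp; linarith

theorem TendstoLocallyUniformlyOn.differentiableOn_of_properSpace [ProperSpace E]
    [CompleteSpace F] {ι : Type*} [SemilatticeSup ι] [Nonempty ι] {Ω : Set E} {φ : ι → E → F}
    {g : E → F} (hconv : TendstoLocallyUniformlyOn φ g atTop Ω) (hΩ : IsOpen Ω)
    (hφ : ∀ j, DifferentiableOn ℂ (φ j) Ω) :
    DifferentiableOn ℂ g Ω := by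
  intro z hz
  obtain ⟨r, hr, hrΩ⟩ : ∃ r > 0, closedBall z (2 * r) ⊆ Ω := by
    obtain ⟨ε, hε, hεΩ⟩ := isOpen_iff.1 hΩ z hz
    exact ⟨ε / 4, by positivity, (closedBall_subset_ball (by linarith)).trans hεΩ⟩
  have hunif : TendstoUniformlyOn φ g atTop (closedBall z (2 * r)) :=
    (tendstoLocallyUniformlyOn_iff_forall_isCompact hΩ).1 hconv _ hrΩ (isCompact_closedBall _ _)
  have hφ' : UniformCauchySeqOn (fun j => fderiv ℂ (φ j)) atTop (ball z r) :=
    Complex.uniformCauchySeqOn_fderiv_ball hr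
      (fun j => (hφ j).mono (ball_subset_closedBall.trans hrΩ))
      (hunif.uniformCauchySeqOn.mono ball_subset_closedBall)
  have hsub : ball z r ⊆ Ω :=
    (ball_subset_ball (by linarith)).trans (ball_subset_closedBall.trans hrΩ)
  refine (hasFDerivAt_of_tendstoUniformlyOn
    (g' := fun w => limUnder atTop fun j => fderiv ℂ (φ j) w) isOpen_ball
    (hφ'.tendstoUniformlyOn_of_tendsto fun w hw => (hφ'.cauchySeq hw).tendsto_limUnder)
    (fun j w hw => ((hφ j).differentiableAt (hΩ.mem_nhds (hsub hw))).hasFDerivAt)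
    (fun w hw => hconv.tendsto_at (hsub hw)) (mem_ball_self hr)).differentiableAt
    |>.differentiableWithinAt

theorem Set.LeftInvOn.of_tendstoLocallyUniformlyOn {ι X Y : Type*} [UniformSpace X] [T2Space X]
    [TopologicalSpace Y] {l : Filter ι} [l.NeBot] {s : Set X} {t : Set Y}
    {φ : ι → X → Y} {ψ : ι → Y → X} {g : X → Y} {h : Y → X}
    (hinv : ∀ j, LeftInvOn (ψ j) (φ j) s) (hφt : ∀ j, MapsTo (φ j) s t)
    (hφ : ∀ x ∈ s, Tendsto (fun j => φ j x) l (𝓝 (g x)))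
    (hψ : TendstoLocallyUniformlyOn ψ h l t) (hh : ContinuousOn h t) (hgt : MapsTo g s t) :
    LeftInvOn h g s := by
  intro x hx
  have hlim : Tendsto (fun j => ψ j (φ j x)) l (𝓝 (h (g x))) :=
    hψ.tendsto_comp (hh _ (hgt hx)) (hgt hx)
      (tendsto_nhdsWithin_iff.2 ⟨hφ x hx, Eventually.of_forall fun j => hφt j hx⟩)
  simp only [fun j => hinv j hx] at hlim
  exact tendsto_nhds_unique hlim tendsto_const_nhds

theorem ContinuousMap.tendstoLocallyUniformlyOn_of_tendsto {ι X α : Type*} [TopologicalSpace X]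
    [UniformSpace α] {s : Set X} [WeaklyLocallyCompactSpace s] {l : Filter ι}
    {F : ι → C(s, α)} {f : C(s, α)} {φ : ι → X → α} {g : X → α}
    (hF : Tendsto F l (𝓝 f)) (hFφ : ∀ j (x : s), F j x = φ j x) (hfg : ∀ x : s, f x = g x) :
    TendstoLocallyUniformlyOn φ g l s := by
  rw [tendstoLocallyUniformlyOn_iff_tendstoLocallyUniformly_comp_coe]
  convert ContinuousMap.tendsto_iff_tendstoLocallyUniformly.1 hF using 1
  · funext j x
    exact (hFφ j x).symm
  · funext x
    exact (hfg x).symm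

namespace IsAut

variable {Ω : Set E} {φ ψ : E → E}

theorem of_invOn (hφ : DifferentiableOn ℂ φ Ω) (hψ : DifferentiableOn ℂ ψ Ω)
    (hφΩ : MapsTo φ Ω Ω) (hψΩ : MapsTo ψ Ω Ω) (hinv : InvOn ψ φ Ω Ω) : IsAut Ω φ :=
  ⟨hφ, hinv.bijOn hφΩ hψΩ, ψ, hψ, hinv.1, hinv.2⟩

theorem exists_invOn (h : IsAut Ω φ) : ∃ ψ, IsAut Ω ψ ∧ InvOn ψ φ Ω Ω := by
  obtain ⟨hφ, hbij, ψ, hψ, hl, hr⟩ := h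
  have hinv : InvOn ψ φ Ω Ω := ⟨hl, hr⟩
  exact ⟨ψ, of_invOn hψ hφ (hinv.1.mapsTo hbij.surjOn) hbij.mapsTo hinv.symm, hinv⟩

def toContinuousMap (h : IsAut Ω φ) : C(Ω, E) :=
  ⟨Ω.domRestrict φ, h.1.continuousOn.domRestrict⟩

theorem toContinuousMap_mem_autSet (h : IsAut Ω φ) : h.toContinuousMap ∈ AutSet Ω :=
  ⟨φ, h, fun _ => rfl⟩

end IsAut

def autOrbit (Ω : Set E) (q : E) : Set E :=
  {y | ∃ φ, IsAut Ω φ ∧ φ q = y}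

theorem autOrbit_subset {Ω : Set E} {q : E} (hq : q ∈ Ω) : autOrbit Ω q ⊆ Ω := by
  rintro _ ⟨φ, hφ, rfl⟩
  exact hφ.2.1.mapsTo hq

theorem exists_tendsto_frontier_of_not_closure_autOrbit_subset {Ω : Set E} (hΩ : IsOpen Ω)
    {q : E} (hq : q ∈ Ω) (h : ¬ closure (autOrbit Ω q) ⊆ Ω) :
    ∃ p ∈ frontier Ω, ∃ φ : ℕ → E → E,
      (∀ j, IsAut Ω (φ j)) ∧ Tendsto (fun j => φ j q) atTop (𝓝 p) := by
  obtain ⟨p, hp, hpΩ⟩ := not_subset.1 h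
  obtain ⟨y, hy, hyp⟩ := mem_closure_iff_seq_limit.1 hp
  choose φ hφ hφy using hy
  refine ⟨p, ⟨closure_mono (autOrbit_subset hq) hp, by rwa [hΩ.interior_eq]⟩, φ, hφ, ?_⟩
  simpa only [hφy] using hyp

theorem mapsTo_of_tendsto_of_closure_autOrbit_subset {Ω : Set E}
    (horb : ∀ q ∈ Ω, closure (autOrbit Ω q) ⊆ Ω) {φ : ℕ → E → E} {g : E → E}
    (hφ : ∀ j, IsAut Ω (φ j)) (hφg : ∀ z ∈ Ω, Tendsto (fun j => φ j z) atTop (𝓝 (g z))) :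
    MapsTo g Ω Ω := fun z hz =>
  horb z hz (mem_closure_of_tendsto (hφg z hz) (Eventually.of_forall fun j => ⟨φ j, hφ j, rfl⟩))

theorem IsAut.of_tendstoLocallyUniformlyOn [ProperSpace E] {Ω : Set E} (hΩ : IsOpen Ω)
    (horb : ∀ q ∈ Ω, closure (autOrbit Ω q) ⊆ Ω) {φ ψ : ℕ → E → E} {g h : E → E}
    (hφ : ∀ j, IsAut Ω (φ j)) (hψ : ∀ j, IsAut Ω (ψ j)) (hinv : ∀ j, InvOn (ψ j) (φ j) Ω Ω)
    (hφg : TendstoLocallyUniformlyOn φ g atTop Ω) (hψh : TendstoLocallyUniformlyOn ψ h atTop Ω) :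
    IsAut Ω g := by
  have hg := hφg.differentiableOn_of_properSpace hΩ fun j => (hφ j).1
  have hh := hψh.differentiableOn_of_properSpace hΩ fun j => (hψ j).1
  have hgΩ := mapsTo_of_tendsto_of_closure_autOrbit_subset horb hφ fun z hz => hφg.tendsto_at hz
  have hhΩ := mapsTo_of_tendsto_of_closure_autOrbit_subset horb hψ fun z hz => hψh.tendsto_at hz
  refine of_invOn hg hh hgΩ hhΩ ⟨?_, ?_⟩
  · exact LeftInvOn.of_tendstoLocallyUniformlyOn (fun j => (hinv j).1)
      (fun j => (hφ j).2.1.mapsTo) (fun z hz => hφg.tendsto_at hz) hψh hh.continuousOn hgΩ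
  · exact LeftInvOn.of_tendstoLocallyUniformlyOn (fun j => (hinv j).2)
      (fun j => (hψ j).2.1.mapsTo) (fun z hz => hψh.tendsto_at hz) hφg hg.continuousOn hhΩ

theorem isCompact_closure_autSet [ProperSpace E] {Ω : Set E} (hΩ : IsOpen Ω)
    (hbd : Bornology.IsBounded Ω) : IsCompact (closure (AutSet Ω)) := by
  have : LocallyCompactSpace Ω := hΩ.locallyCompactSpace
  choose φ hφ hfφ using fun f : AutSet Ω => f.2
  have heq : EquicontinuousOn φ Ω :=
    Complex.equicontinuousOn_of_differentiableOn_of_mapsTo hΩ hbd (fun f => (hφ f).1)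
      (fun f => (hφ f).2.1.mapsTo)
  rw [← equicontinuous_restrict_iff] at heq
  refine ContinuousMap.isCompact_closure_of_equicontinuous ?_ fun x =>
    ⟨closure Ω, hbd.isCompact_closure, fun f hf => ?_⟩
  · convert heq using 1
    funext f x
    exact hfφ f x
  · obtain ⟨φ, hφ, hfφ⟩ := hf
    rw [hfφ]
    exact subset_closure (hφ.2.1.mapsTo x.2)

theorem isClosed_autSet [ProperSpace E] {Ω : Set E} (hΩ : IsOpen Ω) (hbd : Bornology.IsBounded Ω)
    (horb : ∀ q ∈ Ω, closure (autOrbit Ω q) ⊆ Ω) : IsClosed (AutSet Ω) := by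
  have : LocallyCompactSpace Ω := hΩ.locallyCompactSpace
  refine isClosed_of_closure_subset fun f hf => ?_
  obtain ⟨F, hF, hFf⟩ := mem_closure_iff_seq_limit.1 hf
  choose φ hφ hFφ using hF
  choose ψ hψ hinv using fun j => (hφ j).exists_invOn
  obtain ⟨f', -, k, hk, hψf'⟩ := (isCompact_closure_autSet hΩ hbd).isSeqCompact
    fun j => subset_closure (hψ j).toContinuousMap_mem_autSet
  let g : E → E := Function.extend Subtype.val f id
  have hfg : ∀ x : Ω, f x = g x := fun x => (Subtype.val_injective.extend_apply f id x).symm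
  refine ⟨g, ?_, hfg⟩
  refine IsAut.of_tendstoLocallyUniformlyOn hΩ horb (fun j => hφ (k j)) (fun j => hψ (k j))
    (fun j => hinv (k j)) ?_ (ContinuousMap.tendstoLocallyUniformlyOn_of_tendsto hψf'
      (fun _ _ => rfl) fun x => (Subtype.val_injective.extend_apply f' id x).symm)
  exact ContinuousMap.tendstoLocallyUniformlyOn_of_tendsto (hFf.comp hk.tendsto_atTop)
    (fun j => hFφ (k j)) hfg

theorem cartan_noncompact_automorphism_group_general {n : ℕ}
    (Ω : Set (EuclideanSpace ℂ (Fin (n + 1))))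
    (hopen : IsOpen Ω) (hbd : Bornology.IsBounded Ω)
    (hnc : ¬ IsCompact (AutSet Ω)) :
    ∃ p ∈ frontier Ω, ∃ q ∈ Ω,
      ∃ φ : ℕ → EuclideanSpace ℂ (Fin (n + 1)) → EuclideanSpace ℂ (Fin (n + 1)),
        (∀ j, IsAut Ω (φ j)) ∧ Tendsto (fun j => φ j q) atTop (𝓝 p) := by
  by_contra hcon
  have horb : ∀ q ∈ Ω, closure (autOrbit Ω q) ⊆ Ω := fun q hq => by
    by_contra hsub
    obtain ⟨p, hp, φ, hφ, hφq⟩ :=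
      exists_tendsto_frontier_of_not_closure_autOrbit_subset hopen hq hsub
    exact hcon ⟨p, hp, q, hq, φ, hφ, hφq⟩
  apply hnc
  rw [← (isClosed_autSet hopen hbd horb).closure_eq]
  exact isCompact_closure_autSet hopen hbd

/-- Cartan's lemma: if `Ω ⊆ ℂ^{n+1}` is a bounded domain whose automorphism group is
not compact in the compact-open topology, then there are `p ∈ ∂Ω`, `q ∈ Ω` and
automorphisms `φ_j` with `φ_j q → p`. -/
theorem cartan_noncompact_automorphism_group {n : ℕ}
    (Ω : Set (EuclideanSpace ℂ (Fin (n + 1))))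
    (hopen : IsOpen Ω) (hconn : IsConnected Ω) (hbd : Bornology.IsBounded Ω)
    (hnc : ¬ IsCompact (AutSet Ω)) :
    ∃ p ∈ frontier Ω, ∃ q ∈ Ω,
      ∃ φ : ℕ → EuclideanSpace ℂ (Fin (n + 1)) → EuclideanSpace ℂ (Fin (n + 1)),
        (∀ j, IsAut Ω (φ j)) ∧ Tendsto (fun j => φ j q) atTop (𝓝 p) :=
  cartan_noncompact_automorphism_group_general Ω hopen hbd hnc
end

section
/- Every bounded domain Ω ⊆ ℂ^{n+1} with C² boundary (i.e. admitting a C² defining function ρ : ℂ^{n+1} → ℝ with Ω = {ρ < 0} and ∇ρ(p) ≠ 0 for every p ∈ ∂Ω) has at least one strongly pseudoconvex boundary point. -/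
/-!
Let `p` be a point of the closure of `Ω` farthest from the origin. Then `ρ ≥ ρ p = 0` outside the
open ball of radius `‖p‖`, so `dρ_p` is a nonnegative multiple `c` of `⟪p, ·⟫`, positive because
`dρ_p ≠ 0`; in particular a complex tangent vector `w` satisfies `⟪p, w⟫ = ⟪p, I w⟫ = 0`.
Restricting `ρ` to the curves `s ↦ (1 - ε s²) p + s u`, which stay outside that ball, gives
`D²ρ_p(u, u) ≥ c ‖u‖²` for `u ⊥ p`. Since `Re L_p(w) = (D²ρ_p(w, w) + D²ρ_p(I w, I w)) / 4`,
the Levi form is at least `c ‖w‖² / 2 > 0` on the complex tangent space at `p`.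
-/

open Set Filter Topology Metric

variable {E : Type*} [NormedAddCommGroup E] [NormedSpace ℂ E]

/-- `∑ⱼ (∂ρ/∂zⱼ)(q) wⱼ`: the complex-linear part of the real derivative of `ρ`. -/
noncomputable def wirt (ρ : E → ℝ) (w : E) (q : E) : ℂ :=
  (((fderiv ℝ ρ q) w : ℂ) - Complex.I * ((fderiv ℝ ρ q) (Complex.I • w) : ℂ)) / 2

/-- The Levi form `L_p(w) = ∑_{j,k} (∂²ρ/∂zⱼ∂z̄ₖ)(p) wⱼ w̄ₖ`. -/
noncomputable def levi (ρ : E → ℝ) (p : E) (w : E) : ℂ :=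
  ((fderiv ℝ (wirt ρ w) p) w + Complex.I * ((fderiv ℝ (wirt ρ w) p) (Complex.I • w))) / 2

open scoped InnerProductSpace

theorem IsLocalMin.deriv_deriv_nonneg {f : ℝ → ℝ} {a : ℝ} (h : IsLocalMin f a)
    (hc : ContinuousAt f a) : 0 ≤ deriv (deriv f) a := by
  by_contra! hneg
  have hmax : IsLocalMax f a := isLocalMax_of_deriv_deriv_neg hneg h.deriv_eq_zero hc
  have hconst : f =ᶠ[𝓝 a] fun _ => f a := by
    filter_upwards [h, hmax] with x hmin hmax using le_antisymm hmax hmin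
  rw [hconst.deriv.deriv_eq] at hneg
  simp at hneg

theorem IsLocalMin.nonneg_of_hasDerivAt_of_hasDerivAt {f f' : ℝ → ℝ} {a b : ℝ}
    (h : IsLocalMin f a) (hf : ∀ᶠ x in 𝓝 a, HasDerivAt f (f' x) x) (hf' : HasDerivAt f' b a) :
    0 ≤ b := by
  have hderiv : deriv f =ᶠ[𝓝 a] f' := hf.mono fun x hx => hx.deriv
  rw [← (hf'.congr_of_eventuallyEq hderiv).deriv]
  exact h.deriv_deriv_nonneg hf.self_of_nhds.continuousAt

section RealInnerProductSpace

variable {F : Type*} [NormedAddCommGroup F] [InnerProductSpace ℝ F]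

theorem ContinuousLinearMap.eq_smul_innerSL_of_nonneg (f : F →L[ℝ] ℝ) (p : F)
    (h : ∀ v, 0 ≤ ⟪p, v⟫_ℝ → 0 ≤ f v) : f = (f p / ‖p‖ ^ 2) • innerSL ℝ p := by
  have horth : ∀ v, ⟪p, v⟫_ℝ = 0 → f v = 0 := fun v hv =>
    le_antisymm (by simpa using h (-v) (by simp [inner_neg_right, hv])) (h v hv.ge)
  ext v
  set a := ⟪p, v⟫_ℝ / ‖p‖ ^ 2
  have hperp : ⟪p, v - a • p⟫_ℝ = 0 := by
    rcases eq_or_ne p 0 with rfl | hp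
    · simp
    · rw [inner_sub_right, real_inner_smul_right, real_inner_self_eq_norm_sq,
        div_mul_cancel₀ _ (pow_ne_zero 2 (norm_ne_zero_iff.2 hp)), sub_self]
  have hfv := horth _ hperp
  rw [map_sub, map_smul, sub_eq_zero] at hfv
  simp only [hfv, smul_apply, innerSL_apply_apply, smul_eq_mul, a]
  ring

variable {ρ : F → ℝ} {p : F}

theorem IsMinOn.fderiv_nonneg_of_inner_nonneg (hmin : IsMinOn ρ {z | ‖p‖ ≤ ‖z‖} p)
    (hρ : DifferentiableAt ℝ ρ p) {v : F} (hv : 0 ≤ ⟪p, v⟫_ℝ) : 0 ≤ fderiv ℝ ρ p v := by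
  refine hmin.localize.hasFDerivWithinAt_nonneg hρ.hasFDerivAt.hasFDerivWithinAt
    (mem_posTangentConeAt_of_frequently_mem (Eventually.frequently ?_))
  filter_upwards [self_mem_nhdsWithin] with t (ht : 0 < t)
  have hsq : ‖p‖ ^ 2 ≤ ‖p + t • v‖ ^ 2 := by
    rw [norm_add_sq_real, real_inner_smul_right, norm_smul, Real.norm_of_nonneg ht.le]
    nlinarith [mul_nonneg ht.le hv]
  exact (sq_le_sq₀ (norm_nonneg _) (norm_nonneg _)).1 hsq

theorem IsMinOn.fderiv_eq_smul_innerSL (hmin : IsMinOn ρ {z | ‖p‖ ≤ ‖z‖} p)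
    (hρ : DifferentiableAt ℝ ρ p) :
    fderiv ℝ ρ p = (fderiv ℝ ρ p p / ‖p‖ ^ 2) • innerSL ℝ p :=
  (fderiv ℝ ρ p).eq_smul_innerSL_of_nonneg p fun _ => hmin.fderiv_nonneg_of_inner_nonneg hρ

theorem IsMinOn.mul_norm_sq_le_of_inner_eq_zero (hmin : IsMinOn ρ {z | ‖p‖ ≤ ‖z‖} p)
    (hρ : Differentiable ℝ ρ) {T : F →L[ℝ] F →L[ℝ] ℝ} (hT : HasFDerivAt (fderiv ℝ ρ) T p)
    {u : F} (hu : ⟪p, u⟫_ℝ = 0) : fderiv ℝ ρ p p / ‖p‖ ^ 2 * ‖u‖ ^ 2 ≤ T u u := by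
  -- With this `ε` the curve `γ` satisfies `‖γ s‖² = ‖p‖² + ε² s⁴ ‖p‖²`, so it stays outside the
  -- open ball of radius `‖p‖` (for `p = 0`, `ε = 0` and `γ s = s • u`).
  set ε := ‖u‖ ^ 2 / (2 * ‖p‖ ^ 2)
  set γ : ℝ → F := fun s => (1 - ε * s ^ 2) • p + s • u
  set γ' : ℝ → F := fun s => (-(2 * ε * s)) • p + u
  have hγ0 : γ 0 = p := by simp [γ]
  have hγ : ∀ s, HasDerivAt γ (γ' s) s := fun s =>
    ((((hasDerivAt_pow 2 s).const_mul ε).const_sub 1).smul_const p |>.add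
      ((hasDerivAt_id s).smul_const u)).congr_deriv (by simp only [γ']; module)
  have hγ' : HasDerivAt γ' ((-(2 * ε)) • p) 0 :=
    (((hasDerivAt_id (0 : ℝ)).const_mul (2 * ε)).neg.smul_const p |>.add_const u).congr_deriv
      (by simp)
  have hε : 2 * ε * ‖p‖ ^ 2 ≤ ‖u‖ ^ 2 := by
    rcases eq_or_ne ‖p‖ 0 with hp | hp
    · simp [hp]
    · exact le_of_eq (by simp only [ε]; field_simp)
  have hγ_norm : ∀ s, ‖p‖ ≤ ‖γ s‖ := by
    intro s
    have hsq : ‖p‖ ^ 2 ≤ ‖γ s‖ ^ 2 := by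
      simp only [γ]
      rw [norm_add_sq_real, real_inner_smul_left, real_inner_smul_right, hu, norm_smul, norm_smul,
        Real.norm_eq_abs, Real.norm_eq_abs, mul_pow, mul_pow, sq_abs, sq_abs]
      nlinarith [mul_nonneg (sq_nonneg s) (sub_nonneg.2 hε), sq_nonneg (ε * s ^ 2 * ‖p‖)]
    exact (sq_le_sq₀ (norm_nonneg _) (norm_nonneg _)).1 hsq
  have hloc : IsLocalMin (fun s => ρ (γ s)) 0 :=
    Eventually.of_forall fun s => by
      simp only [hγ0]; exact hmin (hγ_norm s)
  have h2 := hloc.nonneg_of_hasDerivAt_of_hasDerivAt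
    (Eventually.of_forall fun s => (hρ _).hasFDerivAt.comp_hasDerivAt s (hγ s))
    ((hγ0 ▸ hT).comp_hasDerivAt 0 (hγ 0) |>.clm_apply hγ')
  simp only [neg_smul, mul_zero, zero_smul, neg_zero, zero_add, Function.comp_apply, hγ0, map_neg,
    map_smul, smul_eq_mul, le_add_neg_iff_add_le, γ'] at h2
  calc fderiv ℝ ρ p p / ‖p‖ ^ 2 * ‖u‖ ^ 2 = 2 * ε * fderiv ℝ ρ p p := by simp only [ε]; ring
    _ ≤ T u u := h2

end RealInnerProductSpace

theorem wirt_eq_zero_iff {ρ : E → ℝ} {w q : E} :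
    wirt ρ w q = 0 ↔ fderiv ℝ ρ q w = 0 ∧ fderiv ℝ ρ q (Complex.I • w) = 0 := by
  simp [wirt, Complex.ext_iff]

theorem levi_re_eq {ρ : E → ℝ} {p w : E} {T : E →L[ℝ] E →L[ℝ] ℝ}
    (hT : HasFDerivAt (fderiv ℝ ρ) T p) :
    (levi ρ p w).re = (T w w + T (Complex.I • w) (Complex.I • w)) / 4 := by
  have hcoe : ∀ u, HasFDerivAt (fun q => (fderiv ℝ ρ q u : ℂ))
      (Complex.ofRealCLM.comp (T.flip u)) p := fun u =>
    Complex.ofRealCLM.hasFDerivAt.comp p (hT.clm_apply (hasFDerivAt_const u p) |>.congr_fderiv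
      (by ext; simp))
  have hwirt : HasFDerivAt (wirt ρ w) _ p :=
    ((hcoe w).sub ((hcoe (Complex.I • w)).const_mul Complex.I)).mul_const (2⁻¹ : ℂ)
  rw [levi, hwirt.fderiv]
  simp only [smul_apply, sub_apply, ContinuousLinearMap.comp_apply, ContinuousLinearMap.flip_apply,
    Complex.ofRealCLM_apply, smul_eq_mul, Complex.div_ofNat_re, Complex.add_re, Complex.mul_re,
    Complex.inv_re, Complex.re_ofNat, Complex.normSq_ofNat, div_self_mul_self', Complex.sub_re,
    Complex.ofReal_re, Complex.I_re, zero_mul, Complex.I_im, Complex.ofReal_im, mul_zero, sub_self,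
    sub_zero, Complex.inv_im, Complex.im_ofNat, neg_zero, zero_div, Complex.sub_im, Complex.mul_im,
    one_mul, zero_add, zero_sub, mul_neg, add_zero, sub_neg_eq_add]
  ring

theorem exists_mem_frontier_isMinOn_norm_ge {F : Type*} [NormedAddCommGroup F]
    [NormedSpace ℝ F] [Nontrivial F] [ProperSpace F] {ρ : F → ℝ} (hρ : Continuous ρ)
    (hbd : Bornology.IsBounded {z | ρ z < 0}) (hne : {z | ρ z < 0}.Nonempty) :
    ∃ p ∈ frontier {z | ρ z < 0}, IsMinOn ρ {z | ‖p‖ ≤ ‖z‖} p := by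
  set Ω := {z | ρ z < 0}
  have hopen : IsOpen Ω := isOpen_lt hρ continuous_const
  obtain ⟨p, hpΩ, hpmax⟩ :=
    hbd.isCompact_closure.exists_isMaxOn hne.closure continuous_norm.continuousOn
  have hball : Ω ⊆ ball 0 ‖p‖ := by
    rw [← interior_closedBall', ← hopen.interior_eq]
    exact interior_mono fun z hz => mem_closedBall_zero_iff.2 (hpmax (subset_closure hz))
  have hnonneg : ∀ z, ‖p‖ ≤ ‖z‖ → 0 ≤ ρ z := fun z hz => by
    by_contra! hρz
    exact (mem_ball_zero_iff.1 (hball hρz)).not_ge hz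
  have hρp : ρ p ≤ 0 := closure_lt_subset_le hρ continuous_const hpΩ
  refine ⟨p, ⟨hpΩ, ?_⟩, fun z hz => hρp.trans (hnonneg z hz)⟩
  rw [hopen.interior_eq]
  exact (hnonneg p le_rfl).not_gt

theorem levi_re_pos_of_isMinOn_norm_ge {ι : Type*} [Fintype ι]
    {ρ : EuclideanSpace ℂ ι → ℝ} {p w : EuclideanSpace ℂ ι} (hρ : ContDiff ℝ 2 ρ)
    (hmin : IsMinOn ρ {z | ‖p‖ ≤ ‖z‖} p) (hdρ : fderiv ℝ ρ p ≠ 0) (hw : w ≠ 0)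
    (hwirt : wirt ρ w p = 0) : 0 < (levi ρ p w).re := by
  have hd : Differentiable ℝ ρ := hρ.differentiable (by norm_num)
  have hT : HasFDerivAt (fderiv ℝ ρ) (fderiv ℝ (fderiv ℝ ρ) p) p :=
    ((hρ.fderiv_right (m := 1) (by norm_num)).differentiable one_ne_zero p).hasFDerivAt
  set c := fderiv ℝ ρ p p / ‖p‖ ^ 2
  have hL : fderiv ℝ ρ p = c • innerSL ℝ p := hmin.fderiv_eq_smul_innerSL (hd p)
  have hc : 0 < c := by
    refine lt_of_le_of_ne (div_nonneg ?_ (sq_nonneg _)) fun h => hdρ ?_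
    · exact hmin.fderiv_nonneg_of_inner_nonneg (hd p) real_inner_self_nonneg
    · rw [hL, ← h, zero_smul]
  have horth : ∀ v, fderiv ℝ ρ p v = 0 → ⟪p, v⟫_ℝ = 0 := fun v hv => by
    simpa [hL, hc.ne'] using hv
  obtain ⟨hw₁, hw₂⟩ := wirt_eq_zero_iff.1 hwirt
  have h₁ := hmin.mul_norm_sq_le_of_inner_eq_zero hd hT (horth _ hw₁)
  have h₂ := hmin.mul_norm_sq_le_of_inner_eq_zero hd hT (horth _ hw₂)
  rw [norm_smul, Complex.norm_I, one_mul] at h₂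
  have : 0 < c * ‖w‖ ^ 2 := by positivity
  rw [levi_re_eq hT]
  linarith

/-- Every bounded domain in `ℂ^{n+1}` with `C²` boundary has a strongly pseudoconvex
boundary point. -/
theorem exists_strongly_pseudoconvex_boundary_point {n : ℕ}
    (Ω : Set (EuclideanSpace ℂ (Fin (n + 1))))
    (hconn : IsConnected Ω) (hbd : Bornology.IsBounded Ω)
    (ρ : EuclideanSpace ℂ (Fin (n + 1)) → ℝ) (hρ : ContDiff ℝ 2 ρ)
    (hΩ : Ω = {z | ρ z < 0})
    (hgrad : ∀ p ∈ frontier Ω, fderiv ℝ ρ p ≠ 0) :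
    ∃ p ∈ frontier Ω, ∀ w : EuclideanSpace ℂ (Fin (n + 1)),
      w ≠ 0 → wirt ρ w p = 0 → 0 < (levi ρ p w).re := by
  subst hΩ
  obtain ⟨p, hp, hmin⟩ :=
    exists_mem_frontier_isMinOn_norm_ge hρ.continuous hbd hconn.nonempty
  exact ⟨p, hp, fun w hw hwirt =>
    levi_re_pos_of_isMinOn_norm_ge hρ hmin (hgrad p hp) hw hwirt⟩
end

section
/- Let Ω ⊆ ℂ^{n+1} be a bounded domain and p ∈ ∂Ω. Assume there exist r > 0 and a holomorphic function h : B(p, r) → ℂ (B(p,r) the open Euclidean ball) with h(p) = 1 and |h(ζ)| < 1 for all ζ ∈ (closure(Ω) ∩ B(p,r)) ∖ {p}. If q ∈ Ω and φ_ν ∈ Aut(Ω) satisfy φ_ν(q) → p, then the sequence φ_ν converges to the constant map z ↦ p uniformly on compact subsets of Ω. -/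
/-!
Restrict the maps to complex discs `t ↦ a + t • (x - a)` through a point `a` whose orbit tends
to `p`. By Montel's theorem a subsequence of these discs converges to a holomorphic disc `g` in
`closure Ω` with `g 0 = p`. The peak function `h` satisfies `‖h ∘ g‖ ≤ 1` near `0` with equality
at `0`, so by the maximum modulus principle `g` is constantly `p` near `0`, hence everywhere by
the identity theorem. So convergence of one orbit to `p` propagates uniformly to a ball around
it, and by connectedness to a neighbourhood of every point of `Ω`.
-/

open Set Filter Topology Metric

variable {E : Type*} [NormedAddCommGroup E] [NormedSpace ℂ E]

theorem tendstoUniformlyOn_const_of_forall_subseq {α β : Type*} [PseudoMetricSpace β]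
    {u : ℕ → α → β} {s : Set α} {p : β}
    (h : ∀ ν : ℕ → ℕ, StrictMono ν → ∀ x : ℕ → α, (∀ k, x k ∈ s) →
      Tendsto (fun k => u (ν k) (x k)) atTop (𝓝 p)) :
    TendstoUniformlyOn u (fun _ => p) atTop s := by
  rw [Metric.tendstoUniformlyOn_iff]
  by_contra! hfar
  obtain ⟨ε, hε, hfreq⟩ := hfar
  obtain ⟨ν, hν, hfar⟩ := extraction_of_frequently_atTop hfreq
  choose x hxs hxfar using hfar
  obtain ⟨k, hk⟩ := ((h ν hν x hxs).eventually (ball_mem_nhds p hε)).exists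
  exact (hxfar k).not_gt (by rwa [dist_comm])

theorem EquicontinuousOn.exists_subseq_tendstoUniformlyOn {X α : Type*} [TopologicalSpace X]
    [MetricSpace α] {f : ℕ → X → α} {K : Set X} {C : Set α} (hK : IsCompact K)
    (hC : IsCompact C) (hf : EquicontinuousOn f K) (hfC : ∀ k, ∀ x ∈ K, f k x ∈ C) :
    ∃ g : X → α, ∃ σ : ℕ → ℕ, StrictMono σ ∧ TendstoUniformlyOn (f ∘ σ) g atTop K := by
  have : IsCountablyGenerated (uniformity (UniformOnFun X α {K})) :=
    UniformOnFun.isCountablyGenerated_uniformity {K} (t := fun _ => K) (fun _ => mem_singleton K)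
      monotone_const fun _ hs => ⟨0, (mem_singleton_iff.1 hs).subset⟩
  have hcpt : IsCompact (closure (range (UniformOnFun.ofFun {K} ∘ f))) := by
    refine ArzelaAscoli.isCompact_closure_of_isClosedEmbedding (F := UniformOnFun.toFun {K})
      (by simpa using hK) IsClosedEmbedding.id ?_ ?_
    · intro L hL
      rw [mem_singleton_iff.1 hL]
      exact equicontinuousOn_iff_range.1 hf
    · rintro L hL x hx
      rw [mem_singleton_iff.1 hL] at hx
      exact ⟨C, hC, by rintro _ ⟨k, rfl⟩; exact hfC k x hx⟩
  obtain ⟨g, -, σ, hσ, hlim⟩ := hcpt.tendsto_subseq fun k => subset_closure (mem_range_self k)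
  exact ⟨UniformOnFun.toFun {K} g, σ, hσ,
    UniformOnFun.tendsto_iff_tendstoUniformlyOn.1 hlim K rfl⟩

theorem Complex.equicontinuousOn_of_mapsTo_isBounded {ι G : Type*} [NormedAddCommGroup G]
    [NormedSpace ℂ G] {f : ι → ℂ → G} {U : Set ℂ} {C : Set G} (hU : IsOpen U)
    (hC : Bornology.IsBounded C) (hf : ∀ i, DifferentiableOn ℂ (f i) U)
    (hfC : ∀ i, MapsTo (f i) U C) : EquicontinuousOn f U := by
  intro z₀ hz₀
  refine EquicontinuousAt.equicontinuousWithinAt ?_ U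
  obtain ⟨R, hR, hball⟩ := isOpen_iff.1 hU z₀ hz₀
  refine equicontinuousAt_of_continuity_modulus (fun z => diam C / R * dist z z₀) ?_ f ?_
  · exact (continuous_const.mul (continuous_id.dist continuous_const)).tendsto' z₀ 0 (by simp)
  · filter_upwards [ball_mem_nhds z₀ hR] with z hz i
    rw [dist_comm]
    refine dist_le_div_mul_dist_of_mapsTo_ball ((hf i).mono hball) (fun w hw => ?_) hz
    exact mem_closedBall.2
      (dist_le_diam_of_mem hC (hfC i (hball hw)) (hfC i (hball (mem_ball_self hR))))

/-- Montel's theorem, in the form of uniform convergence on one compact set. -/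
theorem Complex.exists_subseq_tendstoUniformlyOn_of_mapsTo_isCompact {G : Type*}
    [NormedAddCommGroup G] [NormedSpace ℂ G] {f : ℕ → ℂ → G} {U K : Set ℂ} {C : Set G}
    (hU : IsOpen U) (hK : IsCompact K) (hKU : K ⊆ U) (hC : IsCompact C)
    (hf : ∀ k, DifferentiableOn ℂ (f k) U) (hfC : ∀ k, MapsTo (f k) U C) :
    ∃ g : ℂ → G, ∃ σ : ℕ → ℕ, StrictMono σ ∧ TendstoUniformlyOn (f ∘ σ) g atTop K :=
  ((equicontinuousOn_of_mapsTo_isBounded hU hC.isBounded hf hfC).mono hKU)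
    |>.exists_subseq_tendstoUniformlyOn hK hC fun k _ hx => hfC k (hKU hx)

variable {F : Type*} [NormedAddCommGroup F] [NormedSpace ℂ F]

structure IsLocalPeakFunction (K : Set F) (p : F) (r : ℝ) (h : F → ℂ) : Prop where
  radius_pos : 0 < r
  differentiableOn : DifferentiableOn ℂ h (ball p r)
  apply_center : h p = 1
  norm_lt_one : ∀ ζ ∈ (K ∩ ball p r) \ {p}, ‖h ζ‖ < 1

namespace IsLocalPeakFunction

variable {K : Set F} {p : F} {r : ℝ} {h : F → ℂ}

theorem norm_le_one (hh : IsLocalPeakFunction K p r h) {ζ : F} (hζ : ζ ∈ K ∩ ball p r) :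
    ‖h ζ‖ ≤ 1 := by
  rcases eq_or_ne ζ p with rfl | hne
  · rw [hh.apply_center, norm_one]
  · exact (hh.norm_lt_one ζ ⟨hζ, hne⟩).le

theorem eventuallyEq_of_mem (hh : IsLocalPeakFunction K p r h) {g : E → F} {z₀ : E}
    (hg : ∀ᶠ z in 𝓝 z₀, DifferentiableAt ℂ g z) (hgK : ∀ᶠ z in 𝓝 z₀, g z ∈ K)
    (hg₀ : g z₀ = p) : g =ᶠ[𝓝 z₀] fun _ => p := by
  have hnear : ∀ᶠ z in 𝓝 z₀, g z ∈ K ∩ ball p r := by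
    refine hgK.and (hg.self_of_nhds.continuousAt.preimage_mem_nhds ?_)
    exact hg₀ ▸ ball_mem_nhds p hh.radius_pos
  have hhg : ∀ᶠ z in 𝓝 z₀, DifferentiableAt ℂ (h ∘ g) z := by
    filter_upwards [hg, hnear] with z hgz hz
    exact (hh.differentiableOn.differentiableAt (isOpen_ball.mem_nhds hz.2)).comp z hgz
  have hmax : IsLocalMax (norm ∘ h ∘ g) z₀ := by
    filter_upwards [hnear] with z hz
    simpa [hg₀, hh.apply_center] using hh.norm_le_one hz
  filter_upwards [Complex.norm_eventually_eq_of_isLocalMax hhg hmax, hnear] with z hz hzK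
  by_contra hne
  have hz1 : ‖h (g z)‖ = 1 := by simpa [hg₀, hh.apply_center] using hz
  exact (hh.norm_lt_one (g z) ⟨hzK, hne⟩).ne hz1

variable [CompleteSpace F] {Ω : Set E} {f : ℕ → E → F}

theorem eqOn_of_mapsTo (hh : IsLocalPeakFunction K p r h) {g : ℂ → F} {U : Set ℂ}
    (hU : IsOpen U) (hUc : IsPreconnected U) (hg : DifferentiableOn ℂ g U) (hgK : MapsTo g U K)
    {z₀ : ℂ} (hz₀ : z₀ ∈ U) (hg₀ : g z₀ = p) : EqOn g (fun _ => p) U :=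
  (hg.analyticOnNhd hU).eqOn_of_preconnected_of_eventuallyEq analyticOnNhd_const hUc hz₀ <|
    hh.eventuallyEq_of_mem (hg.eventually_differentiableAt (hU.mem_nhds hz₀))
      (eventually_of_mem (hU.mem_nhds hz₀) hgK) hg₀

theorem tendsto_apply_of_disc_subset (hh : IsLocalPeakFunction K p r h) (hK : IsCompact K)
    (hf : ∀ k, DifferentiableOn ℂ (f k) Ω) (hfK : ∀ k, MapsTo (f k) Ω K) {a : E}
    (ha : Tendsto (fun k => f k a) atTop (𝓝 p)) {x : ℕ → E}
    (hdisc : ∀ k, ∀ t ∈ ball (0 : ℂ) 2, a + t • (x k - a) ∈ Ω) :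
    Tendsto (fun k => f k (x k)) atTop (𝓝 p) := by
  refine tendsto_of_subseq_tendsto fun ns hns => ?_
  set D : ℕ → ℂ → F := fun k t => f (ns k) (a + t • (x (ns k) - a))
  have hD : ∀ k, DifferentiableOn ℂ (D k) (ball 0 2) := fun k =>
    (hf (ns k)).comp (by fun_prop) (hdisc (ns k))
  have hDK : ∀ k, MapsTo (D k) (ball 0 2) K := fun k t ht => hfK (ns k) (hdisc (ns k) t ht)
  obtain ⟨g, σ, hσ, hDg⟩ := Complex.exists_subseq_tendstoUniformlyOn_of_mapsTo_isCompact
    isOpen_ball (isCompact_closedBall 0 (3 / 2)) (closedBall_subset_ball (by norm_num)) hK hD hDK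
  have hsub : ball (0 : ℂ) (3 / 2) ⊆ ball 0 2 := ball_subset_ball (by norm_num)
  have hg : DifferentiableOn ℂ g (ball 0 (3 / 2)) :=
    (hDg.mono ball_subset_closedBall).tendstoLocallyUniformlyOn.differentiableOn
      (Eventually.of_forall fun k => (hD (σ k)).mono hsub) isOpen_ball
  have hgK : MapsTo g (ball 0 (3 / 2)) K := fun t ht =>
    hK.isClosed.mem_of_tendsto (hDg.tendsto_at (ball_subset_closedBall ht))
      (Eventually.of_forall fun k => hDK (σ k) (hsub ht))
  have hg₀ : g 0 = p := by
    refine tendsto_nhds_unique (hDg.tendsto_at (mem_closedBall_self (by norm_num))) ?_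
    simpa [D, Function.comp_def] using ha.comp (hns.comp hσ.tendsto_atTop)
  have hg₁ : g 1 = p :=
    hh.eqOn_of_mapsTo isOpen_ball (convex_ball 0 _).isPreconnected hg hgK
      (mem_ball_self (by norm_num)) hg₀ (by rw [mem_ball_zero_iff, norm_one]; norm_num)
  refine ⟨σ, ?_⟩
  simpa [D, hg₁] using hDg.tendsto_at (x := 1) (by rw [mem_closedBall_zero_iff, norm_one]; norm_num)

theorem tendstoUniformlyOn_ball_of_tendsto (hh : IsLocalPeakFunction K p r h)
    (hK : IsCompact K) (hf : ∀ k, DifferentiableOn ℂ (f k) Ω) (hfK : ∀ k, MapsTo (f k) Ω K)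
    {c : E} {s : ℝ} (hball : ball c (5 * s) ⊆ Ω) {a : E} (ha : a ∈ ball c s)
    (hlim : Tendsto (fun k => f k a) atTop (𝓝 p)) :
    TendstoUniformlyOn f (fun _ => p) atTop (ball c s) := by
  refine tendstoUniformlyOn_const_of_forall_subseq fun ν hν x hx => ?_
  refine hh.tendsto_apply_of_disc_subset hK (fun k => hf (ν k)) (fun k => hfK (ν k))
    (hlim.comp hν.tendsto_atTop) fun k t ht => hball ?_
  rw [mem_ball_iff_norm] at ha ⊢
  rw [mem_ball_zero_iff] at ht
  have hxc := mem_ball_iff_norm.1 (hx k)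
  have hxa : ‖x k - a‖ ≤ 2 * s :=
    calc ‖x k - a‖ = ‖(x k - c) - (a - c)‖ := by congr 1; abel
      _ ≤ ‖x k - c‖ + ‖a - c‖ := norm_sub_le _ _
      _ ≤ 2 * s := by linarith
  calc ‖a + t • (x k - a) - c‖ = ‖(a - c) + t • (x k - a)‖ := by congr 1; abel
    _ ≤ ‖a - c‖ + ‖t‖ * ‖x k - a‖ := (norm_add_le _ _).trans_eq (by rw [norm_smul])
    _ < 5 * s := by nlinarith [norm_nonneg t, norm_nonneg (x k - a)]

theorem tendstoLocallyUniformlyOn_of_tendsto (hh : IsLocalPeakFunction K p r h)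
    (hK : IsCompact K) (hΩ : IsOpen Ω) (hΩc : IsPreconnected Ω)
    (hf : ∀ k, DifferentiableOn ℂ (f k) Ω) (hfK : ∀ k, MapsTo (f k) Ω K) {q : E} (hq : q ∈ Ω)
    (hlim : Tendsto (fun k => f k q) atTop (𝓝 p)) :
    TendstoLocallyUniformlyOn f (fun _ => p) atTop Ω := by
  have hsmall : ∀ c ∈ Ω, ∃ s > 0, ball c (5 * s) ⊆ Ω := fun c hc => by
    obtain ⟨R, hR, hRΩ⟩ := isOpen_iff.1 hΩ c hc
    exact ⟨R / 5, by positivity, by rwa [mul_div_cancel₀ R (by norm_num)]⟩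
  have hall : ∀ z ∈ Ω, Tendsto (fun k => f k z) atTop (𝓝 p) := fun z hz => by
    refine hΩc.induction₂' (fun x y => Tendsto (fun k => f k x) atTop (𝓝 p) →
      Tendsto (fun k => f k y) atTop (𝓝 p)) (fun x hx => ?_)
      (fun _ _ _ _ _ _ hxy hyz => hyz ∘ hxy) hq hz hlim
    obtain ⟨s, hs, hsΩ⟩ := hsmall x hx
    filter_upwards [nhdsWithin_le_nhds (ball_mem_nhds x hs)] with y hy
    have hunif : ∀ a ∈ ball x s, Tendsto (fun k => f k a) atTop (𝓝 p) →
        TendstoUniformlyOn f (fun _ => p) atTop (ball x s) := fun a ha =>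
      hh.tendstoUniformlyOn_ball_of_tendsto hK hf hfK hsΩ ha
    exact ⟨fun hxlim => (hunif x (mem_ball_self hs) hxlim).tendsto_at hy,
      fun hylim => (hunif y hy hylim).tendsto_at (mem_ball_self hs)⟩
  refine tendstoLocallyUniformlyOn_of_forall_exists_nhds fun z hz => ?_
  obtain ⟨s, hs, hsΩ⟩ := hsmall z hz
  exact ⟨ball z s, mem_nhdsWithin_of_mem_nhds (ball_mem_nhds z hs),
    hh.tendstoUniformlyOn_ball_of_tendsto hK hf hfK hsΩ (mem_ball_self hs) (hall z hz)⟩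

end IsLocalPeakFunction

theorem localization_at_peak_point_general {n : ℕ}
    (Ω : Set (EuclideanSpace ℂ (Fin (n + 1))))
    (hopen : IsOpen Ω) (hconn : IsConnected Ω) (hbd : Bornology.IsBounded Ω)
    (p : EuclideanSpace ℂ (Fin (n + 1)))
    (r : ℝ) (hr : 0 < r) (h : EuclideanSpace ℂ (Fin (n + 1)) → ℂ)
    (hhol : DifferentiableOn ℂ h (ball p r)) (hpeak : h p = 1)
    (hlt : ∀ ζ ∈ (closure Ω ∩ ball p r) \ {p}, ‖h ζ‖ < 1)
    (q : EuclideanSpace ℂ (Fin (n + 1))) (hq : q ∈ Ω)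
    (φ : ℕ → EuclideanSpace ℂ (Fin (n + 1)) → EuclideanSpace ℂ (Fin (n + 1)))
    (hφ : ∀ ν, IsAut Ω (φ ν))
    (hlim : Tendsto (fun ν => φ ν q) atTop (𝓝 p)) :
    TendstoLocallyUniformlyOn (fun ν => φ ν) (fun _ => p) atTop Ω :=
  IsLocalPeakFunction.tendstoLocallyUniformlyOn_of_tendsto ⟨hr, hhol, hpeak, hlt⟩
    hbd.isCompact_closure hopen hconn.isPreconnected (fun ν => (hφ ν).1)
    (fun ν => (hφ ν).2.1.mapsTo.mono_right subset_closure) hq hlim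

/-- Localization: if `p ∈ ∂Ω` admits a local holomorphic peak function and an
automorphism orbit `φ_ν q → p`, then `φ_ν` converges to the constant map `p`
uniformly on compact subsets of `Ω`. -/
theorem localization_at_peak_point {n : ℕ}
    (Ω : Set (EuclideanSpace ℂ (Fin (n + 1))))
    (hopen : IsOpen Ω) (hconn : IsConnected Ω) (hbd : Bornology.IsBounded Ω)
    (p : EuclideanSpace ℂ (Fin (n + 1))) (hp : p ∈ frontier Ω)
    (r : ℝ) (hr : 0 < r) (h : EuclideanSpace ℂ (Fin (n + 1)) → ℂ)
    (hhol : DifferentiableOn ℂ h (ball p r)) (hpeak : h p = 1)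
    (hlt : ∀ ζ ∈ (closure Ω ∩ ball p r) \ {p}, ‖h ζ‖ < 1)
    (q : EuclideanSpace ℂ (Fin (n + 1))) (hq : q ∈ Ω)
    (φ : ℕ → EuclideanSpace ℂ (Fin (n + 1)) → EuclideanSpace ℂ (Fin (n + 1)))
    (hφ : ∀ ν, IsAut Ω (φ ν))
    (hlim : Tendsto (fun ν => φ ν q) atTop (𝓝 p)) :
    TendstoLocallyUniformlyOn (fun ν => φ ν) (fun _ => p) atTop Ω :=
  localization_at_peak_point_general Ω hopen hconn hbd p r hr h hhol hpeak hlt q hq φ hφ hlim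
end
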